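/- In the Partition-based Condorcet-control construction for deleting voters (register the t+2 voters: weight-1 voter voting p > a > b, weight-2K voter voting b > p > a, and voters of weights 2k_1,…,2k_t voting a > p > b, where Σ k_i = 2K), with deletion limit t: there exists a subcollection of at most t voters whose deletion makes p the Condorcet winner if and only if there exists I ⊆ {1,…,t} with Σ_{i∈I} k_i = K. -/

import Mathlib

/-!
Call the voters that remain after the deletion the kept voters, and let `s` be the total of the
`k i` over the kept `a > p > b` voters. If the `b > p > a` voter is kept, `p` beats `a` and `b`
exactly when `2s < ε + 2K` and `2K < ε + 2s`, where `ε ≤ 1` is the weight of the kept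
`p > a > b` voter; this forces `s = K`. If it is deleted, `p` beats `a` only when `2s < ε ≤ 1`,
so, all `k i` being positive, every `a > p > b` voter is deleted too: `t + 1` deletions.
-/

/-- The three candidates. -/
inductive Cand : Type
  | p | a | b
deriving DecidableEq, Repr

instance : Fintype Cand := ⟨{Cand.p, Cand.a, Cand.b}, fun x => by cases x <;> simp⟩

/-- Rank function for the preference order `p > a > b` (smaller = preferred). -/
def rPAB : Cand → ℕ := fun c => match c with | .p => 0 | .a => 1 | .b => 2
/-- Rank function for the preference order `b > p > a`. -/
def rBPA : Cand → ℕ := fun c => match c with | .b => 0 | .p => 1 | .a => 2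
/-- Rank function for the preference order `a > p > b`. -/
def rAPB : Cand → ℕ := fun c => match c with | .a => 0 | .p => 1 | .b => 2

/-- Total weight of the voters in a weighted election. -/
def totalWeight (M : Multiset (ℕ × (Cand → ℕ))) : ℕ := (M.map Prod.fst).sum

/-- Total weight of voters preferring `c` to `d`. -/
def wPref (M : Multiset (ℕ × (Cand → ℕ))) (c d : Cand) : ℕ :=
  (M.map (fun v => if v.2 c < v.2 d then v.1 else 0)).sum

/-- `c` is the (weighted) Condorcet winner. -/
def wCondorcet (M : Multiset (ℕ × (Cand → ℕ))) (c : Cand) : Prop :=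
  ∀ d, d ≠ c → totalWeight M < 2 * wPref M c d

namespace Multiset

variable {α β : Type*}

theorem le_cons_iff_le_or_exists {a : α} {s t : Multiset α} :
    s ≤ a ::ₘ t ↔ s ≤ t ∨ ∃ s' ≤ t, s = a ::ₘ s' := by
  refine ⟨fun h => ?_, ?_⟩
  · induction s using Quotient.inductionOn
    induction t using Quotient.inductionOn
    obtain ⟨l, hperm, hsub⟩ := h
    rcases List.sublist_cons_iff.mp hsub with hl | ⟨r, rfl, hr⟩
    · exact .inl ⟨l, hperm, hl⟩
    · exact .inr ⟨r, hr.subperm, (Quotient.sound hperm).symm⟩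
  · rintro (h | ⟨s', h, rfl⟩)
    · exact h.trans (le_cons_self t a)
    · exact cons_le_cons a h

theorem exists_le_of_le_map {f : α → β} {s : Multiset β} {t : Multiset α}
    (h : s ≤ t.map f) : ∃ u ≤ t, s = u.map f := by
  induction s using Quotient.inductionOn
  induction t using Quotient.inductionOn
  obtain ⟨l, hperm, hsub⟩ := h
  obtain ⟨l', hsub', rfl⟩ := List.sublist_map_iff.mp hsub
  exact ⟨l', hsub'.subperm, (Quotient.sound hperm).symm⟩

theorem exists_le_card_le_sub_iff [DecidableEq α] {M : Multiset α} {n : ℕ}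
    {P : Multiset α → Prop} :
    (∃ D ≤ M, card D ≤ n ∧ P (M - D)) ↔ ∃ R ≤ M, card M ≤ card R + n ∧ P R := by
  constructor
  · rintro ⟨D, hD, hcard, hP⟩
    refine ⟨M - D, tsub_le_self, ?_, hP⟩
    rw [card_sub hD]
    have := card_le_card hD
    omega
  · rintro ⟨R, hR, hcard, hP⟩
    refine ⟨M - R, tsub_le_self, ?_, by rwa [tsub_tsub_cancel_of_le hR]⟩
    rw [card_sub hR]
    omega

end Multiset

theorem Finset.exists_subset_of_le_map_val {ι β : Type*} {f : ι → β} {S : Finset ι}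
    {s : Multiset β} (h : s ≤ S.val.map f) : ∃ J ⊆ S, s = J.val.map f := by
  obtain ⟨u, hu, rfl⟩ := Multiset.exists_le_of_le_map h
  exact ⟨⟨u, Multiset.nodup_of_le hu S.nodup⟩, Finset.val_le_iff.mp hu, rfl⟩

section Election

variable {ι : Type*}

@[simp]
theorem totalWeight_cons (v : ℕ × (Cand → ℕ)) (M : Multiset (ℕ × (Cand → ℕ))) :
    totalWeight (v ::ₘ M) = v.1 + totalWeight M := by
  simp [totalWeight]

@[simp]
theorem totalWeight_map_finset (w : ι → ℕ) (r : Cand → ℕ) (J : Finset ι) :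
    totalWeight (J.val.map fun i => (w i, r)) = ∑ i ∈ J, w i := by
  simp [totalWeight]

@[simp]
theorem wPref_cons (v : ℕ × (Cand → ℕ)) (M : Multiset (ℕ × (Cand → ℕ))) (c d : Cand) :
    wPref (v ::ₘ M) c d = (if v.2 c < v.2 d then v.1 else 0) + wPref M c d := by
  simp [wPref]

@[simp]
theorem wPref_map_finset (w : ι → ℕ) (r : Cand → ℕ) (J : Finset ι) (c d : Cand) :
    wPref (J.val.map fun i => (w i, r)) c d = if r c < r d then ∑ i ∈ J, w i else 0 := by
  split_ifs <;> simp [wPref, *]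

theorem wCondorcet_p_iff (M : Multiset (ℕ × (Cand → ℕ))) :
    wCondorcet M .p ↔ totalWeight M < 2 * wPref M .p .a ∧ totalWeight M < 2 * wPref M .p .b :=
  ⟨fun h => ⟨h .a (by decide), h .b (by decide)⟩, fun ⟨ha, hb⟩ d hd => by cases d <;> trivial⟩

end Election

theorem stmt18_general (t K : ℕ) (k : Fin t → ℕ) (hk : ∀ i, 0 < k i) :
    (∃ D ≤ ((1, rPAB) ::ₘ (2 * K, rBPA) ::ₘ
        (Finset.univ : Finset (Fin t)).val.map (fun i => (2 * k i, rAPB))),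
      Multiset.card D ≤ t ∧
      wCondorcet (((1, rPAB) ::ₘ (2 * K, rBPA) ::ₘ
        (Finset.univ : Finset (Fin t)).val.map (fun i => (2 * k i, rAPB))) - D) Cand.p) ↔
    (∃ I : Finset (Fin t), ∑ i ∈ I, k i = K) := by
  rw [Multiset.exists_le_card_le_sub_iff (P := (wCondorcet · .p))]
  constructor
  · rintro ⟨R, hR, hcard, hR_win⟩
    rcases Multiset.le_cons_iff_le_or_exists.mp hR with hR' | ⟨R', hR', rfl⟩ <;>
    rcases Multiset.le_cons_iff_le_or_exists.mp hR' with hR'' | ⟨R'', hR'', rfl⟩ <;>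
    obtain ⟨J, -, rfl⟩ := Finset.exists_subset_of_le_map_val hR'' <;>
    simp only [wCondorcet_p_iff, totalWeight_cons, totalWeight_map_finset, wPref_cons,
      wPref_map_finset, ← Finset.mul_sum, rPAB, rBPA, rAPB, Nat.reduceLT, ↓reduceIte,
      Multiset.card_cons, Multiset.card_map, Finset.card_val, Finset.card_univ, Fintype.card_fin]
      at hcard hR_win
    -- the `b > p > a` voter is deleted and the `p > a > b` voter kept
    case inr.inl =>
      have := Finset.sum_pos (fun i _ => hk i) (Finset.card_pos.mp (by omega : 0 < J.card))
      omega
    all_goals exact ⟨J, by omega⟩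
  · rintro ⟨I, hI⟩
    refine ⟨(1, rPAB) ::ₘ (2 * K, rBPA) ::ₘ I.val.map (fun i => (2 * k i, rAPB)), ?_, ?_⟩
    · exact Multiset.cons_le_cons _ <| Multiset.cons_le_cons _ <|
        Multiset.map_le_map <| Finset.val_le_iff.mpr I.subset_univ
    · simp only [wCondorcet_p_iff, totalWeight_cons, totalWeight_map_finset, wPref_cons,
        wPref_map_finset, ← Finset.mul_sum, rPAB, rBPA, rAPB, Nat.reduceLT, ↓reduceIte,
        Multiset.card_cons, Multiset.card_map, Finset.card_val, Finset.card_univ, Fintype.card_fin]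
      omega

/-- In the Partition-based Condorcet deleting-voters construction (voters:
weight 1 voting `p > a > b`, weight `2K` voting `b > p > a`, and weights `2k_1,…,2k_t`
voting `a > p > b`, with `Σ k_i = 2K`), some subcollection of at most `t` voters can be
deleted so that `p` becomes the Condorcet winner iff some `I ⊆ {1,…,t}` has
`Σ_{i∈I} k_i = K`. -/
theorem stmt18 (t K : ℕ) (hK : 0 < K) (k : Fin t → ℕ) (hk : ∀ i, 0 < k i)
    (hsum : ∑ i, k i = 2 * K) :
    (∃ D ≤ ((1, rPAB) ::ₘ (2 * K, rBPA) ::ₘ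
        (Finset.univ : Finset (Fin t)).val.map (fun i => (2 * k i, rAPB))),
      Multiset.card D ≤ t ∧
      wCondorcet (((1, rPAB) ::ₘ (2 * K, rBPA) ::ₘ
        (Finset.univ : Finset (Fin t)).val.map (fun i => (2 * k i, rAPB))) - D) Cand.p) ↔
    (∃ I : Finset (Fin t), ∑ i ∈ I, k i = K) :=
  stmt18_general t K k hk
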